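/- Every probability measure μ on the group G₂ = (ℤ/2ℤ)² whose support contains at most 2 elements belongs to TEC(G₂). -/

import Mathlib

open scoped BigOperators

/-- The group `G₂ = (ℤ/2ℤ)²`. -/
abbrev G2 : Type := ZMod 2 × ZMod 2

/-- The character pairing `(x,y) = (-1)^(x₁y₁+x₂y₂)`. -/
noncomputable def pairing2 (x y : G2) : ℝ :=
  (-1 : ℝ) ^ (x.1.val * y.1.val + x.2.val * y.2.val)

/-- A probability measure on `G₂`, given by its mass function. -/
def IsProb2 (p : G2 → ℝ) : Prop := (∀ x, 0 ≤ p x) ∧ ∑ x : G2, p x = 1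

/-- The characteristic function `μ̂(y) = Σ_x (x,y) μ({x})`. -/
noncomputable def charFn2 (p : G2 → ℝ) (y : G2) : ℝ := ∑ x : G2, pairing2 x y * p x

/-- The measure of a set `E ⊆ G₂`. -/
noncomputable def measOf2 (p : G2 → ℝ) (E : Set G2) : ℝ := ∑ x : G2, E.indicator p x

/-- `μ` has a trivial equivalence class: every probability measure `ν` with
`|ν̂| = |μ̂|` is a shift `μₓ` of `μ` (central symmetry is the identity on `G₂`). -/
def TEC2 (p : G2 → ℝ) : Prop :=
  ∀ q : G2 → ℝ, IsProb2 q → (∀ y : G2, |charFn2 q y| = |charFn2 p y|) →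
    ∃ x : G2, ∀ e : G2, q e = p (e + x)

/-- The support of `μ`: the set of points of positive mass. -/
def support2 (p : G2 → ℝ) : Set G2 := {x : G2 | 0 < p x}

/-- `a_max = max_{x∈G₂} μ({x})`. -/
noncomputable def amax2 (p : G2 → ℝ) : ℝ := sSup (Set.range p)

/-!
If `p` is supported on a coset `{a, a + h}` of `{0, h}`, take a character `y` with kernel `{0, h}`
and a character `z` with `(h, z) = -1`. Then `|p̂(y)| = 1`, and a probability measure `q` with
`|q̂(y)| = 1` is concentrated on a single coset `{b, b + h}` of that kernel. Now
`|q̂(z)| = |q(b) - q(b + h)|` and `|p̂(z)| = |p(a) - p(a + h)|`; since both pairs of masses sum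
to one, `q` is the translate of `p` by `a + b` or by `a + b + h`.
-/

lemma neg_one_pow_val_add {R : Type*} [Ring R] (u v : ZMod 2) :
    (-1 : R) ^ (u + v).val = (-1) ^ u.val * (-1) ^ v.val := by
  rw [ZMod.val_add, ← neg_one_pow_eq_pow_mod_two (R := R), pow_add]

lemma pairing2_eq_neg_one_pow (x y : G2) :
    pairing2 x y = (-1) ^ (x.1 * y.1 + x.2 * y.2).val := by
  rw [neg_one_pow_val_add, pairing2, pow_add, neg_one_pow_eq_pow_mod_two (x.1.val * y.1.val),
    neg_one_pow_eq_pow_mod_two (x.2.val * y.2.val), ← ZMod.val_mul, ← ZMod.val_mul]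

lemma pairing2_add_left (x x' y : G2) :
    pairing2 (x + x') y = pairing2 x y * pairing2 x' y := by
  simp only [pairing2_eq_neg_one_pow, ← neg_one_pow_val_add, Prod.fst_add, Prod.snd_add]
  ring_nf

lemma pairing2_eq_one_iff (x y : G2) : pairing2 x y = 1 ↔ x.1 * y.1 + x.2 * y.2 = 0 := by
  rw [pairing2_eq_neg_one_pow]
  generalize x.1 * y.1 + x.2 * y.2 = u
  obtain rfl | rfl : u = 0 ∨ u = 1 := by revert u; decide
  all_goals norm_num [ZMod.val_one]

lemma pairing2_eq_neg_one_iff (x y : G2) : pairing2 x y = -1 ↔ x.1 * y.1 + x.2 * y.2 = 1 := by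
  rw [pairing2_eq_neg_one_pow]
  generalize x.1 * y.1 + x.2 * y.2 = u
  obtain rfl | rfl : u = 0 ∨ u = 1 := by revert u; decide
  all_goals norm_num [ZMod.val_one]

lemma abs_pairing2 (x y : G2) : |pairing2 x y| = 1 := by
  simp [pairing2]

lemma exists_pairing2_kernel_eq_pair (h : G2) (hh : h ≠ 0) :
    ∃ y z : G2, pairing2 h y = 1 ∧ pairing2 h z = -1 ∧
      ∀ d, pairing2 d y = 1 → d = 0 ∨ d = h := by
  simp only [pairing2_eq_one_iff, pairing2_eq_neg_one_iff]
  revert h; decide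

lemma charFn2_zero (p : G2 → ℝ) : charFn2 p 0 = ∑ x, p x := by
  simp [charFn2, (pairing2_eq_one_iff _ _).2]

lemma charFn2_eq_of_support_subset_pair {p : G2 → ℝ} {a h : G2} (hh : h ≠ 0)
    (hp : Function.support p ⊆ {a, a + h}) (y : G2) :
    charFn2 p y = pairing2 a y * (p a + pairing2 h y * p (a + h)) := by
  have hzero (x : G2) (hx : x ≠ a ∧ x ≠ a + h) : pairing2 x y * p x = 0 := by
    have hpx : p x = 0 := by
      by_contra hpx
      rcases hp hpx with rfl | rfl
      exacts [hx.1 rfl, hx.2 rfl]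
    rw [hpx, mul_zero]
  rw [charFn2, Fintype.sum_eq_add a (a + h) (left_ne_add.2 hh) hzero, pairing2_add_left]
  ring

lemma mass_eq_one_of_support_subset_pair {p : G2 → ℝ} {a h : G2} (hp : IsProb2 p)
    (hh : h ≠ 0) (hpa : Function.support p ⊆ {a, a + h}) : p a + p (a + h) = 1 := by
  have := charFn2_eq_of_support_subset_pair hh hpa 0
  rwa [charFn2_zero, hp.2, (pairing2_eq_one_iff _ _).2 (by simp),
    (pairing2_eq_one_iff _ _).2 (by simp), one_mul, one_mul, eq_comm] at this

lemma eq_one_of_sum_mul_eq_sum {ι R : Type*} [CommRing R] [LinearOrder R] [IsStrictOrderedRing R]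
    {s : Finset ι} {ε w : ι → R} (hw : ∀ i ∈ s, 0 ≤ w i) (hε : ∀ i ∈ s, ε i ≤ 1)
    (h : ∑ i ∈ s, ε i * w i = ∑ i ∈ s, w i) {i : ι} (hi : i ∈ s) (hwi : w i ≠ 0) : ε i = 1 := by
  have hsum : ∑ j ∈ s, (1 - ε j) * w j = 0 := by
    simp only [sub_mul, one_mul, Finset.sum_sub_distrib, h, sub_self]
  have hi0 := (Finset.sum_eq_zero_iff_of_nonneg fun j hj =>
    mul_nonneg (sub_nonneg.2 (hε j hj)) (hw j hj)).1 hsum i hi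
  linarith [(mul_eq_zero.1 hi0).resolve_right hwi]

lemma pairing2_add_eq_one_of_abs_charFn2_eq_one {q : G2 → ℝ} {x x' y : G2} (hq : IsProb2 q)
    (hy : |charFn2 q y| = 1) (hx : q x ≠ 0) (hx' : q x' ≠ 0) : pairing2 (x + x') y = 1 := by
  have hle (s : ℝ) (hs : s = 1 ∨ s = -1) (z : G2) : s * pairing2 z y ≤ 1 := by
    rcases hs with rfl | rfl <;> linarith [abs_le.1 (abs_pairing2 z y).le]
  obtain ⟨s, hs, hsum⟩ :
      ∃ s : ℝ, (s = 1 ∨ s = -1) ∧ ∑ z, s * pairing2 z y * q z = ∑ z, q z := by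
    rw [charFn2] at hy
    rcases abs_eq zero_le_one |>.1 hy with h | h
    · exact ⟨1, .inl rfl, by simp only [one_mul, h, hq.2]⟩
    · exact ⟨-1, .inr rfl, by
      simp only [neg_mul, one_mul, Finset.sum_neg_distrib, h, hq.2, neg_neg]⟩
  have hsx := eq_one_of_sum_mul_eq_sum (fun z _ => hq.1 z) (fun z _ => hle s hs z) hsum
    (Finset.mem_univ x) hx
  have hsx' := eq_one_of_sum_mul_eq_sum (fun z _ => hq.1 z) (fun z _ => hle s hs z) hsum
    (Finset.mem_univ x') hx'
  rw [pairing2_add_left]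
  rcases hs with rfl | rfl <;> linarith [congrArg₂ (· * ·) hsx hsx']

lemma exists_support_subset_pair_of_abs_charFn2_eq_one {q : G2 → ℝ} {h y : G2} (hq : IsProb2 q)
    (hy : |charFn2 q y| = 1) (hker : ∀ d, pairing2 d y = 1 → d = 0 ∨ d = h) :
    ∃ b, Function.support q ⊆ {b, b + h} := by
  obtain ⟨b, -, hb⟩ := Finset.exists_ne_zero_of_sum_ne_zero (hq.2.symm ▸ one_ne_zero)
  refine ⟨b, fun x hx => ?_⟩
  rcases hker _ (pairing2_add_eq_one_of_abs_charFn2_eq_one hq hy hx hb) with hxb | hxb <;>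
    rw [CharTwo.add_eq_iff_eq_add] at hxb <;> simp [hxb, add_comm]

lemma eq_shift_of_support_subset_pair {p q : G2 → ℝ} {a b h : G2}
    (hp : Function.support p ⊆ {a, a + h}) (hq : Function.support q ⊆ {b, b + h})
    (hb : q b = p a) (hbh : q (b + h) = p (a + h)) (e : G2) : q e = p (e + (b + a)) := by
  have ha : a + (b + a) = b := by linear_combination a * (CharTwo.two_eq_zero (R := G2))
  have hah : a + h + (b + a) = b + h := by linear_combination a * (CharTwo.two_eq_zero (R := G2))
  have hmem : e + (b + a) ∈ ({a, a + h} : Set G2) ↔ e ∈ ({b, b + h} : Set G2) := by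
    simp only [Set.mem_insert_iff, Set.mem_singleton_iff, CharTwo.add_eq_iff_eq_add (R := G2),
      ha, hah]
  by_cases he : e ∈ ({b, b + h} : Set G2)
  · rcases he with rfl | rfl
    · rwa [CharTwo.add_eq_iff_eq_add.2 ha.symm]
    · rwa [CharTwo.add_eq_iff_eq_add.2 hah.symm]
  · rw [Function.notMem_support.1 fun h' => he (hq h'),
      Function.notMem_support.1 fun h' => he (hmem.1 (hp h'))]

theorem tec2_of_support_subset_pair {p : G2 → ℝ} {a h : G2} (hp : IsProb2 p) (hh : h ≠ 0)
    (hpa : Function.support p ⊆ {a, a + h}) : TEC2 p := by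
  intro q hq hpq
  obtain ⟨y, z, hy, hz, hker⟩ := exists_pairing2_kernel_eq_pair h hh
  have hpmass := mass_eq_one_of_support_subset_pair hp hh hpa
  have hqy : |charFn2 q y| = 1 := by
    rw [hpq, charFn2_eq_of_support_subset_pair hh hpa, hy, one_mul, hpmass, mul_one, abs_pairing2]
  obtain ⟨b, hqb⟩ := exists_support_subset_pair_of_abs_charFn2_eq_one hq hqy hker
  have hqmass := mass_eq_one_of_support_subset_pair hq hh hqb
  have hdiff : |q b - q (b + h)| = |p a - p (a + h)| := by
    simpa only [charFn2_eq_of_support_subset_pair hh hqb, charFn2_eq_of_support_subset_pair hh hpa,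
      hz, abs_mul, abs_pairing2, one_mul, neg_one_mul, ← sub_eq_add_neg] using hpq z
  rcases abs_eq_abs.1 hdiff with hd | hd
  · exact ⟨b + a, eq_shift_of_support_subset_pair hpa hqb (by linarith) (by linarith)⟩
  · have hpa' : Function.support p ⊆ {a + h, a + h + h} := by
      rwa [add_assoc, CharTwo.add_self_eq_zero, add_zero, Set.pair_comm]
    exact ⟨b + (a + h), eq_shift_of_support_subset_pair hpa' hqb (by linarith)
      (by rw [add_assoc, CharTwo.add_self_eq_zero, add_zero]; linarith)⟩

lemma exists_subset_pair_of_ncard_le_two {S : Set G2} (hS : S.ncard ≤ 2) :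
    ∃ a h : G2, h ≠ 0 ∧ S ⊆ {a, a + h} := by
  rcases hS.lt_or_eq with hS | hS
  · obtain ⟨a, ha⟩ := (Set.ncard_le_one_iff_subset_singleton (Set.toFinite S)).1 (by omega)
    exact ⟨a, (1, 0), by decide, ha.trans (by simp)⟩
  · obtain ⟨a, b, hab, rfl⟩ := Set.ncard_eq_two.1 hS
    refine ⟨a, a + b, ?_, ?_⟩
    · rwa [Ne, CharTwo.add_eq_iff_eq_add, zero_add]
    · rw [← add_assoc, CharTwo.add_self_eq_zero, zero_add]

lemma support2_eq_support {p : G2 → ℝ} (hp : ∀ x, 0 ≤ p x) :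
    support2 p = Function.support p := by
  ext x
  exact (hp x).lt_iff_ne'

/-- Theorem 3, case 1: every probability measure on `G₂` whose support
has at most 2 elements belongs to `TEC(G₂)`. -/
theorem stmt15 (p : G2 → ℝ) (hp : IsProb2 p)
    (hsupp : (support2 p).ncard ≤ 2) :
    TEC2 p := by
  obtain ⟨a, h, hh, hpa⟩ := exists_subset_pair_of_ncard_le_two hsupp
  exact tec2_of_support_subset_pair hp hh (support2_eq_support hp.1 ▸ hpa)
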